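/- Let $\{a_i\}_{i=1}^n$ and $\{b_i\}_{i=1}^n$ be sequences of positive real numbers such that $a_1 = b_1$ and for each $i$ with $1 \le i < n$, $a_{i+1} \le (a_i^{-1} + b_{i+1}^{-1})^{-1}$ (i.e., $a_{i+1}$ is at most the harmonic sum of $a_i$ and $b_{i+1}$). Then $\left(\sum_{i=1}^n a_i\right)^2 \le \frac{4}{3}\, b_1 \sum_{i=1}^n b_i$. -/

import Mathlib

/-!
Write `A = a₁` and `R = a₂ + ⋯ + aₙ`. The recursion forces `a` to decrease and
`b_{k+1} ≥ w_k := (a_{k+1}⁻¹ - a_k⁻¹)⁻¹`, the number whose harmonic sum with `a_k` is `a_{k+1}`.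
Cauchy–Schwarz with weights `w_k` gives `R² ≤ W (R - Q)`, where `W = ∑ w_k` and
`Q = ∑ a_{k+1}² / a_k`, and with weights `a_k` it gives `R² ≤ (A + R) Q`. Eliminating `Q` yields
`R (A + R) ≤ A W ≤ A (b₂ + ⋯ + bₙ)`, and the claim follows from
`4/3 (A² + A R + R²) - (A + R)² = (A - R)² / 3`.
-/

open Finset

theorem lt_and_inv_sub_inv_inv_le_of_le_inv_add_inv {x p q : ℝ} (hx : 0 < x) (hp : 0 < p)
    (hq : 0 < q) (h : x ≤ (p⁻¹ + q⁻¹)⁻¹) : x < p ∧ (x⁻¹ - p⁻¹)⁻¹ ≤ q := by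
  have hinv : p⁻¹ + q⁻¹ ≤ x⁻¹ := by simpa using inv_anti₀ hx h
  have hq' : 0 < q⁻¹ := inv_pos.mpr hq
  refine ⟨(inv_lt_inv₀ hp hx).mp (by linarith), ?_⟩
  calc (x⁻¹ - p⁻¹)⁻¹ ≤ (q⁻¹)⁻¹ := inv_anti₀ hq' (by linarith)
    _ = q := inv_inv q

theorem sum_mul_add_sum_le_mul_sum_inv_sub_inv {ι : Type*} (s : Finset ι) {x p : ι → ℝ} {c : ℝ}
    (hx : ∀ i ∈ s, 0 < x i) (hxp : ∀ i ∈ s, x i < p i)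
    (hc : ∑ i ∈ s, p i ≤ c + ∑ i ∈ s, x i) :
    (∑ i ∈ s, x i) * (c + ∑ i ∈ s, x i) ≤ c * ∑ i ∈ s, ((x i)⁻¹ - (p i)⁻¹)⁻¹ := by
  rcases s.eq_empty_or_nonempty with rfl | hs
  · simp
  set R := ∑ i ∈ s, x i
  set W := ∑ i ∈ s, ((x i)⁻¹ - (p i)⁻¹)⁻¹
  set Q := ∑ i ∈ s, x i ^ 2 / p i
  have hp : ∀ i ∈ s, 0 < p i := fun i hi => (hx i hi).trans (hxp i hi)
  have hw : ∀ i ∈ s, 0 < (x i)⁻¹ - (p i)⁻¹ := fun i hi =>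
    sub_pos.mpr ((inv_lt_inv₀ (hp i hi) (hx i hi)).mpr (hxp i hi))
  have hR : 0 < R := sum_pos hx hs
  have hQ : 0 ≤ Q := sum_nonneg fun i hi => by have := hp i hi; positivity
  have hW : 0 ≤ W := sum_nonneg fun i hi => by have := hw i hi; positivity
  have hRW : R ^ 2 ≤ W * (R - Q) := by
    have hg : ∑ i ∈ s, x i ^ 2 * ((x i)⁻¹ - (p i)⁻¹) = R - Q := by
      rw [← sum_sub_distrib]
      refine sum_congr rfl fun i hi => ?_
      have := hx i hi
      field_simp
    rw [← hg]
    refine sum_sq_le_sum_mul_sum_of_sq_le_mul s (fun i hi => (inv_pos.mpr (hw i hi)).le)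
      (fun i hi => by have := hw i hi; positivity) (fun i hi => le_of_eq ?_)
    rw [mul_comm (x i ^ 2), inv_mul_cancel_left₀ (hw i hi).ne']
  have hRQ : R ^ 2 ≤ (c + R) * Q := by
    calc R ^ 2 ≤ (∑ i ∈ s, p i) * Q :=
          sum_sq_le_sum_mul_sum_of_sq_le_mul s (fun i hi => (hp i hi).le)
            (fun i hi => by have := hp i hi; positivity)
            (fun i hi => by have := hp i hi; field_simp; rfl)
      _ ≤ (c + R) * Q := mul_le_mul_of_nonneg_right hc hQ
  have hcR : 0 < c + R := (sum_pos hp hs).trans_le hc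
  refine le_of_mul_le_mul_left ?_ hR
  calc R * (R * (c + R)) = R ^ 2 * (c + R) := by ring
    _ ≤ W * (R - Q) * (c + R) := mul_le_mul_of_nonneg_right hRW hcR.le
    _ = W * R * (c + R) - W * ((c + R) * Q) := by ring
    _ ≤ W * R * (c + R) - W * R ^ 2 := by gcongr
    _ = R * (c * W) := by ring

theorem sum_Icc_one_eq_add_sum_Ico_succ {M : Type*} [AddCommMonoid M] (f : ℕ → M) {n : ℕ}
    (hn : 1 ≤ n) : ∑ i ∈ Icc 1 n, f i = f 1 + ∑ i ∈ Ico 1 n, f (i + 1) := by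
  rw [← add_sum_Ioc_eq_sum_Icc hn, sum_Ico_add']
  rfl

theorem stmt0 (n : ℕ) (a b : ℕ → ℝ)
    (ha : ∀ i ∈ Finset.Icc 1 n, 0 < a i)
    (hb : ∀ i ∈ Finset.Icc 1 n, 0 < b i)
    (hab : a 1 = b 1)
    (hrec : ∀ i, 1 ≤ i → i < n → a (i + 1) ≤ ((a i)⁻¹ + (b (i + 1))⁻¹)⁻¹) :
    (∑ i ∈ Finset.Icc 1 n, a i) ^ 2 ≤ 4 / 3 * b 1 * ∑ i ∈ Finset.Icc 1 n, b i := by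
  rcases Nat.eq_zero_or_pos n with rfl | hn
  · simp
  have hmem : ∀ i ∈ Ico 1 n, i ∈ Icc 1 n ∧ i + 1 ∈ Icc 1 n := fun i hi => by
    simp only [mem_Ico, mem_Icc] at hi ⊢
    omega
  have hstep : ∀ i ∈ Ico 1 n, a (i + 1) < a i ∧ ((a (i + 1))⁻¹ - (a i)⁻¹)⁻¹ ≤ b (i + 1) :=
    fun i hi => lt_and_inv_sub_inv_inv_le_of_le_inv_add_inv (ha _ (hmem i hi).2)
      (ha _ (hmem i hi).1) (hb _ (hmem i hi).2) (hrec i (mem_Ico.mp hi).1 (mem_Ico.mp hi).2)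
  have hsum : ∑ i ∈ Ico 1 n, a i ≤ a 1 + ∑ i ∈ Ico 1 n, a (i + 1) := by
    rw [← sum_Icc_one_eq_add_sum_Ico_succ a hn]
    exact sum_le_sum_of_subset_of_nonneg (fun i hi => (hmem i hi).1)
      fun i hi _ => (ha i hi).le
  have hkey := sum_mul_add_sum_le_mul_sum_inv_sub_inv (Ico 1 n)
    (fun i hi => ha _ (hmem i hi).2) (fun i hi => (hstep i hi).1) hsum
  have hW := mul_le_mul_of_nonneg_left (sum_le_sum fun i hi => (hstep i hi).2)
    (ha 1 (mem_Icc.mpr ⟨le_rfl, hn⟩)).le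
  rw [sum_Icc_one_eq_add_sum_Ico_succ a hn, sum_Icc_one_eq_add_sum_Ico_succ b hn, ← hab]
  nlinarith [sq_nonneg (a 1 - ∑ i ∈ Ico 1 n, a (i + 1))]
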